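/- arXiv:2512.18430 — 7 statements merged into one kernel-verified Lean document; each statement's English description precedes it below -/
import Mathlib

section
/- For all real numbers a > 0 and α > 0 with a·α > 1, and for all τ ≥ 0, one has ∫₀^τ e^{s−τ} (a s + 1)^{−α} ds ≤ r_{a,α} (a τ + 1)^{−α}, where r_{a,α} = (aα)^α · ∫₀^{(aα−1)/a} e^{s − (aα−1)/a} (a s + 1)^{−α} ds + (aα + 1) + ((aα+1)/(aα))^α · (1 − e^{−1/a}). -/
/-!
Write `g(s) = (as + 1)^{-α}` and `T = (aα - 1)/a`, so that `aT + 1 = aα`. From `1 + x ≤ eˣ`,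
`e^{u-τ} (aτ + 1)^α ≤ (au + 1)^α` whenever `aα ≤ au + 1` and `u ≤ τ`, and for every `τ` when
`u = T`. Splitting `∫₀^τ e^{s-τ} g = e^{T-τ} ∫₀^T e^{s-T} g + ∫_T^τ e^{s-τ} g`, the first piece
gives the term `(aα)^α ∫₀^T`. On `[T, min τ α]` one has `g ≤ (aα)^{-α}` and the exponential mass
is at most `1 - e^{-1/a}`. On `[α, τ]` the integrand `h(s) = e^{s-τ} g(s)` satisfies
`h ≤ (aα + 1) h'`, so its integral is at most `(aα + 1) h(τ) = (aα + 1) (aτ + 1)^{-α}`.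
-/

open Real MeasureTheory intervalIntegral Set

lemma exp_sub_mul_rpow_le_rpow {a α u τ : ℝ} (hα : 0 ≤ α) (hu : 0 < a * u + 1)
    (hτ : 0 ≤ a * τ + 1) (h : a * α * (τ - u) ≤ (a * u + 1) * (τ - u)) :
    exp (u - τ) * (a * τ + 1) ^ α ≤ (a * u + 1) ^ α := by
  set t := a * (τ - u) / (a * u + 1)
  have hlin : a * τ + 1 ≤ (a * u + 1) * exp t := by
    have hsplit : a * τ + 1 = (a * u + 1) * (t + 1) := by
      simp only [t]; field_simp; ring
    rw [hsplit]
    exact mul_le_mul_of_nonneg_left (add_one_le_exp t) hu.le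
  have hexp : t * α ≤ τ - u := by
    rw [div_mul_eq_mul_div, div_le_iff₀ hu]; linarith
  calc exp (u - τ) * (a * τ + 1) ^ α ≤ exp (u - τ) * ((a * u + 1) ^ α * exp (τ - u)) := by
        gcongr
        calc (a * τ + 1) ^ α ≤ ((a * u + 1) * exp t) ^ α := rpow_le_rpow hτ hlin hα
          _ = (a * u + 1) ^ α * exp (t * α) := by
            rw [mul_rpow hu.le (exp_pos t).le, ← exp_mul]
          _ ≤ _ := by gcongr
    _ = (a * u + 1) ^ α := by rw [mul_left_comm, ← exp_add]; simp

lemma continuousOn_exp_sub_mul_rpow (a c β : ℝ) :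
    ContinuousOn (fun s => exp (s - c) * (a * s + 1) ^ β) {s | 0 < a * s + 1} :=
  (by fun_prop : Continuous fun s => exp (s - c)).continuousOn.mul <|
    ContinuousOn.rpow_const (by fun_prop) fun _ hs => Or.inl (ne_of_gt hs)

lemma intervalIntegrable_exp_sub_mul_rpow {a u v : ℝ} (ha : 0 ≤ a) (hu : 0 < a * u + 1)
    (hv : 0 < a * v + 1) (c β : ℝ) :
    IntervalIntegrable (fun s => exp (s - c) * (a * s + 1) ^ β) volume u v := by
  refine ((continuousOn_exp_sub_mul_rpow a c β).mono fun s hs => ?_).intervalIntegrable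
  have hs : min u v ≤ s := hs.1
  show 0 < a * s + 1
  rcases min_choice u v with h | h <;> rw [h] at hs <;> nlinarith [mul_le_mul_of_nonneg_left hs ha]

lemma integral_exp_sub_mul_eq_add {f : ℝ → ℝ} {u τ : ℝ}
    (h₀ : IntervalIntegrable (fun s => exp (s - τ) * f s) volume 0 u)
    (h₁ : IntervalIntegrable (fun s => exp (s - τ) * f s) volume u τ) :
    ∫ s in (0:ℝ)..τ, exp (s - τ) * f s =
      exp (u - τ) * (∫ s in (0:ℝ)..u, exp (s - u) * f s) + ∫ s in u..τ, exp (s - τ) * f s := by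
  rw [← integral_add_adjacent_intervals h₀ h₁, ← intervalIntegral.integral_const_mul]
  congr 1
  refine integral_congr fun s _ => ?_
  rw [← mul_assoc, ← exp_add]
  ring_nf

lemma hasDerivAt_exp_sub_mul_rpow_neg {a α τ s : ℝ} (hs : 0 < a * s + 1) :
    HasDerivAt (fun x => exp (x - τ) * (a * x + 1) ^ (-α))
      (exp (s - τ) * (a * s + 1) ^ (-α) * (1 - a * α / (a * s + 1))) s := by
  have hexp : HasDerivAt (fun x => exp (x - τ)) (exp (s - τ)) s := by
    simpa using ((hasDerivAt_id s).sub_const τ).exp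
  have hpow := (((hasDerivAt_id s).const_mul a).add_const 1).rpow_const (p := -α) (Or.inl hs.ne')
  refine (hexp.mul hpow).congr_deriv ?_
  simp only [id, mul_one]
  rw [rpow_sub_one hs.ne']
  field_simp
  ring

lemma integral_exp_sub_mul_rpow_neg_bound_mid {a α t₀ m τ : ℝ} (ha : 0 < a) (hα : 0 < α)
    (ht₀ : a * t₀ + 1 = a * α) (ht₀m : t₀ ≤ m) (hmα : m ≤ α) (hmτ : m ≤ τ) :
    (∫ s in t₀..m, exp (s - τ) * (a * s + 1) ^ (-α)) * (a * τ + 1) ^ α ≤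
      ((a * α + 1) / (a * α)) ^ α * (1 - exp (t₀ - α)) := by
  have haα : 0 < a * α := by positivity
  have hcrit : ∀ s, t₀ ≤ s → a * α ≤ a * s + 1 := fun s hs => by nlinarith
  have hint : ∫ s in t₀..m, exp (s - τ) * (a * s + 1) ^ (-α) ≤
      (exp (m - τ) - exp (t₀ - τ)) * (a * α) ^ (-α) := by
    calc _ ≤ ∫ s in t₀..m, exp (s - τ) * (a * α) ^ (-α) := by
          refine integral_mono_on ht₀m (intervalIntegrable_exp_sub_mul_rpow ha.le
            (by linarith) (by linarith [hcrit m ht₀m]) τ (-α))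
            ((by fun_prop : Continuous fun s => exp (s - τ) * (a * α) ^ (-α)).intervalIntegrable _ _)
            fun s hs => ?_
          exact mul_le_mul_of_nonneg_left
            (rpow_le_rpow_of_nonpos haα (hcrit s hs.1) (by linarith)) (exp_pos _).le
      _ = _ := by
          rw [intervalIntegral.integral_mul_const, integral_comp_sub_right (fun x => exp x),
            integral_exp]
  have hgap : exp (m - τ) - exp (t₀ - τ) ≤ exp (m - τ) * (1 - exp (t₀ - α)) := by
    have hfac : exp (t₀ - τ) = exp (m - τ) * exp (t₀ - m) := by rw [← exp_add]; ring_nf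
    have hmono : exp (t₀ - α) ≤ exp (t₀ - m) := exp_le_exp.2 (by linarith)
    rw [hfac]
    nlinarith [exp_pos (m - τ)]
  have hweight : exp (m - τ) * (a * τ + 1) ^ α ≤ (a * α + 1) ^ α :=
    (exp_sub_mul_rpow_le_rpow hα.le (by linarith [hcrit m ht₀m]) (by nlinarith)
      (by nlinarith [hcrit m ht₀m])).trans (rpow_le_rpow (by nlinarith) (by nlinarith) hα.le)
  have hτ : 0 ≤ a * τ + 1 := by nlinarith
  have hα₀ : 0 ≤ 1 - exp (t₀ - α) := by
    rw [sub_nonneg, exp_le_one_iff]; nlinarith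
  calc _ ≤ (exp (m - τ) - exp (t₀ - τ)) * (a * α) ^ (-α) * (a * τ + 1) ^ α := by gcongr
    _ ≤ exp (m - τ) * (1 - exp (t₀ - α)) * (a * α) ^ (-α) * (a * τ + 1) ^ α := by gcongr
    _ = exp (m - τ) * (a * τ + 1) ^ α * (a * α) ^ (-α) * (1 - exp (t₀ - α)) := by ring
    _ ≤ (a * α + 1) ^ α * (a * α) ^ (-α) * (1 - exp (t₀ - α)) := by gcongr
    _ = _ := by rw [div_rpow (by positivity) haα.le, rpow_neg haα.le, div_eq_mul_inv]

lemma integral_exp_sub_mul_rpow_neg_bound_tail {a α u τ : ℝ} (ha : 0 ≤ a) (hα : 0 ≤ α)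
    (hu : a * α < a * u + 1) (huτ : u ≤ τ) :
    (∫ s in u..τ, exp (s - τ) * (a * s + 1) ^ (-α)) * (a * τ + 1) ^ α ≤
      (a * u + 1) / (a * u + 1 - a * α) := by
  set k := (a * u + 1) / (a * u + 1 - a * α)
  set g := fun s => exp (s - τ) * (a * s + 1) ^ (-α)
  have hpos : ∀ s ∈ Icc u τ, 0 < a * s + 1 := fun s hs => by
    nlinarith [mul_le_mul_of_nonneg_left hs.1 ha, mul_nonneg ha hα]
  have hτ := hpos τ ⟨huτ, le_rfl⟩
  have hcont : ContinuousOn g (Icc u τ) := (continuousOn_exp_sub_mul_rpow a τ (-α)).mono hpos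
  have hle : ∀ s ∈ Ioo u τ, g s ≤ k * (g s * (1 - a * α / (a * s + 1))) := fun s hs => by
    have hs₀ := hpos s (Ioo_subset_Icc_self hs)
    have hk : 1 ≤ k * (1 - a * α / (a * s + 1)) := by
      have hden : 0 < a * u + 1 - a * α := by linarith
      rw [show k * (1 - a * α / (a * s + 1)) =
          (a * u + 1) * (a * s + 1 - a * α) / ((a * u + 1 - a * α) * (a * s + 1)) by
            simp only [k]; field_simp, one_le_div (by positivity)]
      nlinarith [mul_nonneg (mul_nonneg ha hα) (mul_nonneg ha (sub_nonneg.2 hs.1.le))]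
    have hg : 0 ≤ g s := by positivity
    nlinarith
  have hFTC := integral_le_sub_of_hasDeriv_right_of_le huτ (hcont.const_smul k)
    (fun s hs => ((hasDerivAt_exp_sub_mul_rpow_neg (hpos s (Ioo_subset_Icc_self hs))).const_mul
      k).hasDerivWithinAt) (hcont.integrableOn_Icc) hle
  have hgu : 0 ≤ k * g u :=
    mul_nonneg (div_nonneg (hpos u ⟨le_rfl, huτ⟩).le (by linarith))
      (mul_nonneg (exp_pos _).le (rpow_nonneg (hpos u ⟨le_rfl, huτ⟩).le _))
  have hgτ : g τ * (a * τ + 1) ^ α = 1 := by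
    simp only [g, sub_self, exp_zero, one_mul, rpow_neg hτ.le]
    exact inv_mul_cancel₀ (rpow_pos_of_pos hτ α).ne'
  calc (∫ s in u..τ, g s) * (a * τ + 1) ^ α ≤ k * g τ * (a * τ + 1) ^ α := by
        gcongr
        simp only [Pi.smul_apply, smul_eq_mul] at hFTC
        linarith
    _ = k := by rw [mul_assoc, hgτ, mul_one]

lemma integral_exp_sub_mul_rpow_neg_bound_from_crit {a α t₀ τ : ℝ} (ha : 0 < a) (hα : 0 < α)
    (ht₀ : a * t₀ + 1 = a * α) (hτ : 0 ≤ a * τ + 1) :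
    (∫ s in t₀..τ, exp (s - τ) * (a * s + 1) ^ (-α)) * (a * τ + 1) ^ α ≤
      (a * α + 1) + ((a * α + 1) / (a * α)) ^ α * (1 - exp (t₀ - α)) := by
  have haα : 0 < a * α := by positivity
  have ht₀α : t₀ < α := by nlinarith
  have hmid_nonneg : 0 ≤ ((a * α + 1) / (a * α)) ^ α * (1 - exp (t₀ - α)) :=
    mul_nonneg (by positivity) (sub_nonneg.2 (exp_le_one_iff.2 (by linarith)))
  rcases le_total τ t₀ with hτt₀ | ht₀τ
  · have hneg : ∫ s in t₀..τ, exp (s - τ) * (a * s + 1) ^ (-α) ≤ 0 := by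
      rw [integral_symm, neg_nonpos]
      refine integral_nonneg hτt₀ fun s hs => mul_nonneg (exp_pos _).le (rpow_nonneg ?_ _)
      nlinarith [mul_le_mul_of_nonneg_left hs.1 ha.le]
    nlinarith [rpow_nonneg hτ α]
  rcases le_total τ α with hτα | hατ
  · linarith [integral_exp_sub_mul_rpow_neg_bound_mid ha hα ht₀ ht₀τ hτα le_rfl]
  · rw [← integral_add_adjacent_intervals
      (intervalIntegrable_exp_sub_mul_rpow (v := α) ha.le (by linarith) (by positivity) τ (-α))
      (intervalIntegrable_exp_sub_mul_rpow ha.le (by positivity) (by nlinarith) τ (-α)), add_mul]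
    have htail := integral_exp_sub_mul_rpow_neg_bound_tail ha.le hα.le (by linarith) hατ
    rw [add_sub_cancel_left, div_one] at htail
    linarith [integral_exp_sub_mul_rpow_neg_bound_mid ha hα ht₀ ht₀α.le le_rfl hατ]

theorem stmt_0 (a α : ℝ) (ha : 0 < a) (hα : 0 < α) (haα : 1 < a * α)
    (τ : ℝ) (hτ : 0 ≤ τ) :
    ∫ s in (0:ℝ)..τ, Real.exp (s - τ) * (a * s + 1) ^ (-α) ≤
      ((a * α) ^ α *
          (∫ s in (0:ℝ)..((a * α - 1) / a),
            Real.exp (s - (a * α - 1) / a) * (a * s + 1) ^ (-α))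
        + (a * α + 1)
        + ((a * α + 1) / (a * α)) ^ α * (1 - Real.exp (-(1 / a))))
        * (a * τ + 1) ^ (-α) := by
  set T := (a * α - 1) / a
  have hT : 0 < T := div_pos (by linarith) ha
  have hTcrit : a * T + 1 = a * α := by simp only [T]; field_simp; ring
  have hTα : T - α = -(1 / a) := by simp only [T]; field_simp; ring
  have hτ' : 0 < a * τ + 1 := by positivity
  have hFT : 0 ≤ ∫ s in (0:ℝ)..T, exp (s - T) * (a * s + 1) ^ (-α) :=
    integral_nonneg hT.le fun s hs => by have := hs.1; positivity
  have hweight : exp (T - τ) * (a * τ + 1) ^ α ≤ (a * α) ^ α := by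
    rw [← hTcrit]
    exact exp_sub_mul_rpow_le_rpow hα.le (by rw [hTcrit]; linarith) hτ'.le (by rw [hTcrit])
  have htail := integral_exp_sub_mul_rpow_neg_bound_from_crit ha hα hTcrit hτ'.le
  rw [rpow_neg hτ'.le, ← div_eq_mul_inv, le_div_iff₀ (rpow_pos_of_pos hτ' α),
    integral_exp_sub_mul_eq_add (u := T)
      (intervalIntegrable_exp_sub_mul_rpow ha.le (by simp) (by linarith) τ (-α))
      (intervalIntegrable_exp_sub_mul_rpow ha.le (by linarith) hτ' τ (-α)), add_mul, ← hTα]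
  nlinarith [mul_le_mul_of_nonneg_left hweight hFT]
end

section
/- Let η > 0 and D ≥ 0, and let V : ℝ → ℝ be nonnegative and differentiable on [0, ∞) such that V′(t) ≤ −η (1 + t) V(t) + D² / (1 + t) for all t ≥ 0. Then there exists a constant C > 0, depending only on η, such that for all t ≥ 0: V(t) ≤ e^{−η t (t + 2) / 2} V(0) + C · D² / (1 + t)². -/
open Real Set

/-!
Multiplying by the integrating factor `exp φ`, with `φ t = η t (t + 2) / 2` and `φ' t = η (1 + t)`,
turns `V' ≤ -φ' V + f` into a comparison principle: `V` stays below every supersolution `U` with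
`V 0 ≤ U 0`. The supersolution `U t = exp (-φ t) V 0 + D² c / (s + t) ²`, with `s = 1 + 4 / η` and
`c = 2 s² / η`, is then bounded by `exp (-φ t) V 0 + c D² / (1 + t) ²`.
-/

theorem nonpos_of_hasDerivWithinAt_le_neg_mul {W W' φ g : ℝ → ℝ} {a : ℝ}
    (hφ : ∀ t, HasDerivAt φ (g t) t)
    (hW : ∀ t ∈ Ici a, HasDerivWithinAt W (W' t) (Ici a) t)
    (hW' : ∀ t ∈ Ici a, W' t ≤ -g t * W t) (ha : W a ≤ 0) :
    ∀ t ∈ Ici a, W t ≤ 0 := by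
  have hanti : AntitoneOn (fun t ↦ exp (φ t) * W t) (Ici a) := by
    refine antitoneOn_of_hasDerivWithinAt_nonpos (f' := fun t ↦ exp (φ t) * (g t * W t + W' t))
      (convex_Ici a) ?_ (fun t ht ↦ ?_) (fun t ht ↦ ?_)
    · exact (continuous_iff_continuousAt.2 fun t ↦ (hφ t).continuousAt).rexp.continuousOn.mul
        fun t ht ↦ (hW t ht).continuousWithinAt
    · rw [interior_Ici] at ht ⊢
      exact ((hφ t).exp.hasDerivWithinAt.mul ((hW t (mem_Ici.2 ht.le)).mono Ioi_subset_Ici_self))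
        |>.congr_deriv (by ring)
    · rw [interior_Ici] at ht
      exact mul_nonpos_of_nonneg_of_nonpos (exp_pos _).le (by linarith [hW' t (mem_Ici.2 ht.le)])
  intro t ht
  have : exp (φ t) * W t ≤ exp (φ a) * W a := hanti self_mem_Ici ht ht
  exact nonpos_of_mul_nonpos_right (this.trans (mul_nonpos_of_nonneg_of_nonpos (exp_pos _).le ha))
    (exp_pos _)

theorem le_of_hasDerivWithinAt_of_supersolution {V U V' U' φ g f : ℝ → ℝ} {a : ℝ}
    (hφ : ∀ t, HasDerivAt φ (g t) t)
    (hV : ∀ t ∈ Ici a, HasDerivWithinAt V (V' t) (Ici a) t)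
    (hU : ∀ t ∈ Ici a, HasDerivWithinAt U (U' t) (Ici a) t)
    (hVf : ∀ t ∈ Ici a, V' t ≤ -g t * V t + f t)
    (hUf : ∀ t ∈ Ici a, -g t * U t + f t ≤ U' t) (ha : V a ≤ U a) :
    ∀ t ∈ Ici a, V t ≤ U t := fun t ht ↦
  sub_nonpos.1 <| nonpos_of_hasDerivWithinAt_le_neg_mul (W := fun t ↦ V t - U t) hφ
    (fun t ht ↦ (hV t ht).sub (hU t ht))
    (fun t ht ↦ by linarith [hVf t ht, hUf t ht]) (sub_nonpos.2 ha) t ht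

theorem hasDerivAt_timeScale (η t : ℝ) :
    HasDerivAt (fun t ↦ η * t * (t + 2) / 2) (η * (1 + t)) t :=
  (((hasDerivAt_id' t).const_mul η).mul ((hasDerivAt_id' t).add_const 2)).div_const 2
    |>.congr_deriv (by ring)

theorem hasDerivAt_div_add_sq (c s t : ℝ) (h : s + t ≠ 0) :
    HasDerivAt (fun x ↦ c / (s + x) ^ 2) (-2 * c / (s + t) ^ 3) t :=
  (hasDerivAt_const t c).div (((hasDerivAt_id' t).const_add s).pow 2) (pow_ne_zero 2 h)
    |>.congr_deriv (by simp only [Pi.pow_apply]; field_simp; ring)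

/-- `w t = c / (s + t) ^ 2` satisfies `1 / (1 + t) ≤ w' t + η (1 + t) w t`: the shift `s` keeps
`|w'|` below half of `η (1 + t) w`, and then `2 s ^ 2 ≤ η c` absorbs the forcing. -/
theorem div_add_sq_supersolution {η s c t : ℝ} (hs : 1 ≤ s) (hηs : 4 ≤ η * s)
    (hc : 2 * s ^ 2 ≤ η * c) (ht : 0 ≤ t) :
    1 / (1 + t) ≤ -2 * c / (s + t) ^ 3 + η * (1 + t) * (c / (s + t) ^ 2) := by
  set x := 1 + t
  set y := s + t
  have hx : 1 ≤ x := by linarith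
  have hsy : s ≤ y := by linarith
  have hyx : y ≤ s * x := by nlinarith
  have hy : 0 ≤ y := by linarith
  have hη : 0 < η := by nlinarith
  have hc0 : 0 ≤ c := by nlinarith
  have hηxy : 4 ≤ η * x * y := by
    have : s ≤ x * y := by nlinarith
    nlinarith [mul_le_mul_of_nonneg_left this hη.le]
  have key : y ^ 3 ≤ c * x * (η * x * y - 2) :=
    calc y ^ 3 = y ^ 2 * y := by ring
      _ ≤ (s * x) ^ 2 * y := by gcongr
      _ ≤ η * c / 2 * x ^ 2 * y := by nlinarith [mul_nonneg (sq_nonneg x) hy]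
      _ ≤ c * x * (η * x * y - 2) := by
        nlinarith [mul_nonneg (mul_nonneg hc0 (by linarith : (0:ℝ) ≤ x))
          (by linarith : 0 ≤ η * x * y - 4)]
  have hrhs : -2 * c / y ^ 3 + η * x * (c / y ^ 2) = c * x * (η * x * y - 2) / (x * y ^ 3) := by
    field_simp
    ring
  rw [hrhs, div_le_div_iff₀ (by positivity) (by positivity)]
  nlinarith

theorem stmt_3 (η : ℝ) (hη : 0 < η) :
    ∃ C > (0:ℝ), ∀ (D : ℝ), 0 ≤ D → ∀ (V V' : ℝ → ℝ),
      (∀ t ≥ (0:ℝ), 0 ≤ V t) →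
      (∀ t ≥ (0:ℝ), HasDerivWithinAt V (V' t) (Set.Ici 0) t) →
      (∀ t ≥ (0:ℝ), V' t ≤ -η * (1 + t) * V t + D ^ 2 / (1 + t)) →
      ∀ t ≥ (0:ℝ),
        V t ≤ Real.exp (-(η * t * (t + 2) / 2)) * V 0 + C * D ^ 2 / (1 + t) ^ 2 := by
  set s := 1 + 4 / η
  have hs : 1 ≤ s := le_add_of_nonneg_right (by positivity)
  have hηs : 4 ≤ η * s := by rw [mul_add, mul_one, mul_div_cancel₀ _ hη.ne']; linarith
  refine ⟨2 * s ^ 2 / η, by positivity, fun D _ V V' _ hV hV' ↦ ?_⟩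
  set c := 2 * s ^ 2 / η
  have hc : 2 * s ^ 2 ≤ η * c := (mul_div_cancel₀ _ hη.ne').ge
  set U := fun t ↦ exp (-(η * t * (t + 2) / 2)) * V 0 + D ^ 2 * (c / (s + t) ^ 2)
  have hU : ∀ t ∈ Ici (0 : ℝ), HasDerivAt U
      (exp (-(η * t * (t + 2) / 2)) * -(η * (1 + t)) * V 0 + D ^ 2 * (-2 * c / (s + t) ^ 3)) t :=
    fun t ht ↦ ((hasDerivAt_timeScale η t).neg.exp.mul_const (V 0)).add
      ((hasDerivAt_div_add_sq c s t (by linarith [mem_Ici.1 ht])).const_mul (D ^ 2))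
  have hUf : ∀ t ∈ Ici (0 : ℝ), -(η * (1 + t)) * U t + D ^ 2 / (1 + t) ≤
      exp (-(η * t * (t + 2) / 2)) * -(η * (1 + t)) * V 0 + D ^ 2 * (-2 * c / (s + t) ^ 3) := by
    intro t ht
    have := mul_le_mul_of_nonneg_left (div_add_sq_supersolution hs hηs hc ht) (sq_nonneg D)
    rw [mul_one_div] at this
    simp only [U]
    linarith
  have hU0 : V 0 ≤ U 0 := by
    simp only [U, mul_zero, zero_mul, zero_div, neg_zero, exp_zero, one_mul, add_zero]
    exact le_add_of_nonneg_right (by positivity)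
  have hVU := le_of_hasDerivWithinAt_of_supersolution (f := fun t ↦ D ^ 2 / (1 + t))
    (hasDerivAt_timeScale η) hV (fun t ht ↦ (hU t ht).hasDerivWithinAt)
    (fun t ht ↦ by linarith [hV' t ht]) hUf hU0
  intro t ht
  calc V t ≤ U t := hVU t ht
    _ ≤ exp (-(η * t * (t + 2) / 2)) * V 0 + D ^ 2 * (c / (1 + t) ^ 2) := by
      simp only [U]
      gcongr
    _ = exp (-(η * t * (t + 2) / 2)) * V 0 + c * D ^ 2 / (1 + t) ^ 2 := by ring
end

section
/- For every η > 0 there exists a finite constant C > 0 such that for all τ ≥ 0: (2 τ / η + 1) · ∫₀^τ e^{−(τ − s)} / (2 s / η + 1) ds ≤ C. -/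
/-!
With `c = 2 / η`: since `c τ + 1 ≤ (c s + 1) (1 + c (τ - s))` for `0 ≤ s ≤ τ`, the weighted integral is bounded by
`∫₀^τ e^{-u} (1 + c u) du`, which increases to `∫₀^∞ e^{-u} (1 + c u) du = 1 + c`.
-/

open Real MeasureTheory intervalIntegral

theorem hasDerivAt_neg_one_add_mul_add_one_mul_exp_neg (c u : ℝ) :
    HasDerivAt (fun u => -(1 + c * (u + 1)) * exp (-u)) (exp (-u) * (1 + c * u)) u := by
  have hAffine : HasDerivAt (fun u => -(1 + c * (u + 1))) (-c) u := by
    simpa using ((((hasDerivAt_id' u).add_const 1).const_mul c).const_add 1).fun_neg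
  have hExp : HasDerivAt (fun u => exp (-u)) (-exp (-u)) u := by
    simpa using (hasDerivAt_neg u).exp
  exact (hAffine.mul hExp).congr_deriv (by ring)

theorem integral_exp_neg_mul_one_add_mul (c τ : ℝ) :
    ∫ u in (0:ℝ)..τ, exp (-u) * (1 + c * u) = 1 + c - (1 + c * (τ + 1)) * exp (-τ) := by
  rw [integral_eq_sub_of_hasDerivAt
    (fun u _ => hasDerivAt_neg_one_add_mul_add_one_mul_exp_neg c u)
    ((by fun_prop : Continuous fun u => exp (-u) * (1 + c * u)).intervalIntegrable _ _)]
  simp only [zero_add, mul_one, neg_zero, exp_zero]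
  ring

theorem integral_exp_neg_mul_one_add_mul_le {c τ : ℝ} (hc : 0 ≤ c) (hτ : 0 ≤ τ) :
    ∫ u in (0:ℝ)..τ, exp (-u) * (1 + c * u) ≤ 1 + c := by
  rw [integral_exp_neg_mul_one_add_mul]
  have : 0 ≤ (1 + c * (τ + 1)) * exp (-τ) := by positivity
  linarith

theorem mul_exp_neg_sub_div_le {c s τ : ℝ} (hc : 0 ≤ c) (hs : 0 ≤ s) (hsτ : s ≤ τ) :
    (c * τ + 1) * (exp (-(τ - s)) / (c * s + 1)) ≤ exp (-(τ - s)) * (1 + c * (τ - s)) := by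
  have hWeight : c * τ + 1 ≤ (c * s + 1) * (1 + c * (τ - s)) := by
    nlinarith [mul_nonneg (mul_nonneg hc hc) (mul_nonneg hs (sub_nonneg.2 hsτ))]
  rw [mul_div_assoc', div_le_iff₀ (by positivity)]
  calc (c * τ + 1) * exp (-(τ - s))
      ≤ (c * s + 1) * (1 + c * (τ - s)) * exp (-(τ - s)) := by gcongr
    _ = exp (-(τ - s)) * (1 + c * (τ - s)) * (c * s + 1) := by ring

theorem mul_integral_exp_neg_sub_div_le {c τ : ℝ} (hc : 0 ≤ c) (hτ : 0 ≤ τ) :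
    (c * τ + 1) * ∫ s in (0:ℝ)..τ, exp (-(τ - s)) / (c * s + 1) ≤ 1 + c := by
  have hKernel : IntervalIntegrable
      (fun s => (c * τ + 1) * (exp (-(τ - s)) / (c * s + 1))) volume 0 τ := by
    refine ContinuousOn.intervalIntegrable fun s hs => ?_
    rw [Set.uIcc_of_le hτ] at hs
    have : c * s + 1 ≠ 0 := by nlinarith [mul_nonneg hc hs.1]
    fun_prop (disch := exact this)
  calc (c * τ + 1) * ∫ s in (0:ℝ)..τ, exp (-(τ - s)) / (c * s + 1)
      = ∫ s in (0:ℝ)..τ, (c * τ + 1) * (exp (-(τ - s)) / (c * s + 1)) :=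
        (intervalIntegral.integral_const_mul _ _).symm
    _ ≤ ∫ s in (0:ℝ)..τ, exp (-(τ - s)) * (1 + c * (τ - s)) :=
        integral_mono_on hτ hKernel
          ((by fun_prop : Continuous fun s => exp (-(τ - s)) * (1 + c * (τ - s))).intervalIntegrable _ _)
          fun s hs => mul_exp_neg_sub_div_le hc hs.1 hs.2
    _ = ∫ u in (0:ℝ)..τ, exp (-u) * (1 + c * u) := by
        simpa using integral_comp_sub_left (fun u => exp (-u) * (1 + c * u)) τ (a := 0) (b := τ)
    _ ≤ 1 + c := integral_exp_neg_mul_one_add_mul_le hc hτ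

theorem stmt_4 (η : ℝ) (hη : 0 < η) :
    ∃ C > (0:ℝ), ∀ τ ≥ (0:ℝ),
      (2 * τ / η + 1) *
        ∫ s in (0:ℝ)..τ, Real.exp (-(τ - s)) / (2 * s / η + 1) ≤ C := by
  refine ⟨1 + 2 / η, by positivity, fun τ hτ => ?_⟩
  simp_rw [← div_mul_eq_mul_div]
  exact mul_integral_exp_neg_sub_div_le (by positivity) hτ
end

section
/- Let 0 < η < 2, D ≥ 0, and let W : ℝ → ℝ be differentiable on [0, ∞) with W′(τ) ≤ −W(τ) + D² / (4 η (2 τ / η + 1)) for all τ ≥ 0. Then for all τ ≥ 0: W(τ) ≤ e^{−τ} W(0) + (D² / (4 η)) · r_{2/η, 1} / (2 τ / η + 1), where r_{a,α} = (aα)^α · ∫₀^{(aα−1)/a} e^{s − (aα−1)/a} (a s + 1)^{−α} ds + (aα + 1) + ((aα+1)/(aα))^α · (1 − e^{−1/a}), evaluated at a = 2/η and α = 1. -/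
/-!
After multiplication by `e^τ` the differential inequality says that
`e^τ W(τ) - ∫₀^τ e^s g(s) ds` is nonincreasing, where `g(s) = c / (a s + 1)` with `a = 2/η` and
`c = D² / (4η)`. The integral `∫₀^τ e^s / (a s + 1) ds` is at most `(a + 1) e^τ / (a τ + 1)`: the
difference of the two sides has derivative `a² e^x (x - 1) / (a x + 1)²`, hence is smallest at
`x = 1`, where it is positive. Finally `a + 1 ≤ r_{a,1}`, the other terms of `r_{a,1}` being
nonnegative once `a ≥ 1`.
-/

open Real MeasureTheory intervalIntegral Set

-- The constant `r_{a,α}` of the auxiliary integral lemma.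
noncomputable def rConst (a α : ℝ) : ℝ :=
  (a * α) ^ α * (∫ s in (0:ℝ)..((a * α - 1) / a), exp (s - (a * α - 1) / a) * (a * s + 1) ^ (-α))
    + (a * α + 1) + ((a * α + 1) / (a * α)) ^ α * (1 - exp (-(1 / a)))

theorem add_le_rConst {a α : ℝ} (ha : 0 < a) (haα : 1 ≤ a * α) : a * α + 1 ≤ rConst a α := by
  have hI : 0 ≤ ∫ s in (0:ℝ)..((a * α - 1) / a), exp (s - (a * α - 1) / a) * (a * s + 1) ^ (-α) :=
    integral_nonneg (div_nonneg (by linarith) ha.le) fun s hs =>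
      mul_nonneg (exp_pos _).le (rpow_nonneg (by nlinarith [hs.1]) _)
  have hexp : exp (-(1 / a)) ≤ 1 := exp_le_one_iff.mpr (by simp [ha.le])
  have h₁ := mul_nonneg (rpow_nonneg (by linarith : (0:ℝ) ≤ a * α) α) hI
  have h₂ := mul_nonneg (rpow_nonneg (by positivity : (0:ℝ) ≤ (a * α + 1) / (a * α)) α)
    (sub_nonneg.mpr hexp)
  unfold rConst
  linarith

theorem continuousOn_primitive_Ici {f : ℝ → ℝ} {a : ℝ} (hf : ContinuousOn f (Ici a)) :
    ContinuousOn (fun y => ∫ t in a..y, f t) (Ici a) := by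
  intro x hx
  have hcont := continuousOn_primitive_interval (μ := volume) (a := a) (b := x + 1)
    (by rw [uIcc_of_le (by linarith [mem_Ici.mp hx])]
        exact (hf.mono Icc_subset_Ici_self).integrableOn_compact isCompact_Icc)
  rw [uIcc_of_le (by linarith [mem_Ici.mp hx])] at hcont
  refine (hcont x ⟨hx, by linarith⟩).mono_of_mem_nhdsWithin ?_
  rw [← Ici_inter_Iic]
  exact inter_mem_nhdsWithin _ (Iic_mem_nhds (by linarith))

theorem hasDerivAt_primitive_of_continuousOn_Ici {f : ℝ → ℝ} {a x : ℝ}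
    (hf : ContinuousOn f (Ici a)) (hx : a < x) :
    HasDerivAt (fun y => ∫ t in a..y, f t) (f x) x :=
  integral_hasDerivAt_right ((hf.mono Icc_subset_Ici_self).intervalIntegrable_of_Icc hx.le)
    ((hf.mono Ioi_subset_Ici_self).stronglyMeasurableAtFilter isOpen_Ioi x hx)
    (hf.continuousAt (Ici_mem_nhds hx))

theorem exp_mul_le_add_integral_of_hasDerivWithinAt {W W' g : ℝ → ℝ}
    (hW : ∀ x ≥ (0:ℝ), HasDerivWithinAt W (W' x) (Ici 0) x) (hg : ContinuousOn g (Ici 0))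
    (hle : ∀ x ≥ (0:ℝ), W' x ≤ -W x + g x) {τ : ℝ} (hτ : 0 ≤ τ) :
    exp τ * W τ ≤ W 0 + ∫ s in (0:ℝ)..τ, exp s * g s := by
  have heg : ContinuousOn (fun s => exp s * g s) (Ici 0) := continuous_exp.continuousOn.mul hg
  set u : ℝ → ℝ := fun x => exp x * W x - ∫ s in (0:ℝ)..x, exp s * g s
  have hu_cont : ContinuousOn u (Ici 0) :=
    (continuous_exp.continuousOn.mul fun x hx => (hW x hx).continuousWithinAt).sub
      (continuousOn_primitive_Ici heg)
  have hu_anti : AntitoneOn u (Ici 0) := by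
    refine antitoneOn_of_hasDerivWithinAt_nonpos (convex_Ici 0) hu_cont
      (f' := fun x => exp x * (W x + W' x - g x)) (fun x hx => ?_) (fun x hx => ?_)
    · rw [interior_Ici] at hx
      have hWx := (hW x (le_of_lt hx)).hasDerivAt (Ici_mem_nhds hx)
      refine (((hasDerivAt_exp x).mul hWx).sub
        (hasDerivAt_primitive_of_continuousOn_Ici heg hx)).hasDerivWithinAt.congr_deriv ?_
      ring
    · rw [interior_Ici] at hx
      exact mul_nonpos_of_nonneg_of_nonpos (exp_pos x).le (by linarith [hle x (le_of_lt hx)])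
  have := hu_anti self_mem_Ici hτ hτ
  simp only [u, exp_zero, one_mul, integral_same, sub_zero] at this
  linarith

theorem integral_exp_div_le {a τ : ℝ} (ha : 0 < a) (hτ : 0 ≤ τ) :
    ∫ s in (0:ℝ)..τ, exp s / (a * s + 1) ≤ (a + 1) * exp τ / (a * τ + 1) := by
  have hpos : ∀ x ∈ Ici (0:ℝ), a * x + 1 ≠ 0 := fun x (hx : 0 ≤ x) => by positivity
  have hf : ContinuousOn (fun s => exp s / (a * s + 1)) (Ici 0) :=
    continuous_exp.continuousOn.div (by fun_prop) hpos
  set h : ℝ → ℝ := fun x => (a + 1) * exp x / (a * x + 1) - ∫ s in (0:ℝ)..x, exp s / (a * s + 1)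
  suffices 0 ≤ h τ by simpa only [h, sub_nonneg] using this
  have hh_cont : ContinuousOn h (Ici 0) :=
    ((continuous_const.mul continuous_exp).continuousOn.div (by fun_prop) hpos).sub
      (continuousOn_primitive_Ici hf)
  -- `h'` vanishes only at `1`, so `h` is minimal there, and `h 1 ≥ e - ∫₀¹ eˢ = 1`.
  set h' : ℝ → ℝ := fun x => a ^ 2 * exp x * (x - 1) / (a * x + 1) ^ 2
  have hh_deriv : ∀ x > 0, HasDerivAt h (h' x) x := by
    intro x hx
    have hne := hpos x hx.le
    refine ((((hasDerivAt_exp x).const_mul (a + 1)).div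
      (((hasDerivAt_id' x).const_mul a).add_const 1) hne).sub
      (hasDerivAt_primitive_of_continuousOn_Ici hf hx)).congr_deriv ?_
    simp only [h']
    field_simp
    ring
  have hh_one : 0 ≤ h 1 := by
    have hle : ∫ s in (0:ℝ)..1, exp s / (a * s + 1) ≤ ∫ s in (0:ℝ)..1, exp s :=
      integral_mono_on zero_le_one (hf.mono Icc_subset_Ici_self |>.intervalIntegrable_of_Icc
        zero_le_one) (continuous_exp.intervalIntegrable 0 1) fun s hs =>
          div_le_self (exp_pos s).le (by nlinarith [hs.1])
    have hval : (a + 1) * exp 1 / (a * 1 + 1) = exp 1 := by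
      rw [mul_one, mul_div_cancel_left₀ _ (by positivity)]
    simp only [h, hval]
    rw [integral_exp, exp_zero] at hle
    linarith
  rcases le_total τ 1 with hτ1 | hτ1
  · refine le_trans hh_one (antitoneOn_of_hasDerivWithinAt_nonpos (convex_Icc 0 1) (f' := h')
      (hh_cont.mono Icc_subset_Ici_self) (fun x hx => ?_) (fun x hx => ?_) ⟨hτ, hτ1⟩
      ⟨zero_le_one, le_rfl⟩ hτ1)
    · rw [interior_Icc] at hx
      exact (hh_deriv x hx.1).hasDerivWithinAt
    · rw [interior_Icc] at hx
      exact div_nonpos_of_nonpos_of_nonneg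
        (mul_nonpos_of_nonneg_of_nonpos (by positivity) (by linarith [hx.2])) (by positivity)
  · refine le_trans hh_one (monotoneOn_of_hasDerivWithinAt_nonneg (convex_Ici 1) (f' := h')
      (hh_cont.mono (Ici_subset_Ici.mpr zero_le_one)) (fun x hx => ?_) (fun x hx => ?_)
      self_mem_Ici hτ1 hτ1)
    · rw [interior_Ici] at hx
      exact (hh_deriv x (zero_lt_one.trans hx)).hasDerivWithinAt
    · rw [interior_Ici] at hx
      have : 0 ≤ x - 1 := by linarith [mem_Ioi.mp hx]
      positivity

theorem le_exp_neg_mul_add_div_of_hasDerivWithinAt {W W' : ℝ → ℝ} {a c : ℝ} (ha : 0 < a)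
    (hc : 0 ≤ c) (hW : ∀ x ≥ (0:ℝ), HasDerivWithinAt W (W' x) (Ici 0) x)
    (hle : ∀ x ≥ (0:ℝ), W' x ≤ -W x + c / (a * x + 1)) {τ : ℝ} (hτ : 0 ≤ τ) :
    W τ ≤ exp (-τ) * W 0 + c * (a + 1) / (a * τ + 1) := by
  have hg : ContinuousOn (fun x => c / (a * x + 1)) (Ici 0) :=
    continuousOn_const.div (by fun_prop) fun x (hx : 0 ≤ x) => by positivity
  have hexp : exp τ * W τ ≤ W 0 + c * ((a + 1) * exp τ / (a * τ + 1)) := by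
    calc exp τ * W τ ≤ W 0 + ∫ s in (0:ℝ)..τ, exp s * (c / (a * s + 1)) :=
          exp_mul_le_add_integral_of_hasDerivWithinAt hW hg hle hτ
      _ = W 0 + c * ∫ s in (0:ℝ)..τ, exp s / (a * s + 1) := by
          rw [← intervalIntegral.integral_const_mul]
          simp only [mul_div_left_comm]
      _ ≤ W 0 + c * ((a + 1) * exp τ / (a * τ + 1)) := by
          gcongr
          exact integral_exp_div_le ha hτ
  calc W τ = exp (-τ) * (exp τ * W τ) := by
        rw [← mul_assoc, ← exp_add, neg_add_cancel, exp_zero, one_mul]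
    _ ≤ exp (-τ) * (W 0 + c * ((a + 1) * exp τ / (a * τ + 1))) := by gcongr
    _ = exp (-τ) * W 0 + c * (a + 1) / (a * τ + 1) := by
        rw [exp_neg]
        field_simp

theorem stmt_5_general (η : ℝ) (hη0 : 0 < η) (hη2 : η < 2) (D : ℝ)
    (W W' : ℝ → ℝ)
    (hW : ∀ τ ≥ (0:ℝ), HasDerivWithinAt W (W' τ) (Set.Ici 0) τ)
    (hineq : ∀ τ ≥ (0:ℝ), W' τ ≤ -W τ + D ^ 2 / (4 * η * (2 * τ / η + 1))) :
    ∀ τ ≥ (0:ℝ),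
      W τ ≤ Real.exp (-τ) * W 0 +
        (D ^ 2 / (4 * η)) *
          (((2 / η) * 1) ^ (1:ℝ) *
              (∫ s in (0:ℝ)..(((2 / η) * 1 - 1) / (2 / η)),
                Real.exp (s - ((2 / η) * 1 - 1) / (2 / η)) *
                  ((2 / η) * s + 1) ^ (-(1:ℝ)))
            + ((2 / η) * 1 + 1)
            + (((2 / η) * 1 + 1) / ((2 / η) * 1)) ^ (1:ℝ) *
                (1 - Real.exp (-(1 / (2 / η))))) / (2 * τ / η + 1) := by
  intro τ hτ
  have hden : ∀ x, 2 * x / η + 1 = 2 / η * x + 1 := fun x => by ring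
  have hle : ∀ x ≥ (0:ℝ), W' x ≤ -W x + D ^ 2 / (4 * η) / (2 / η * x + 1) := fun x hx => by
    simpa only [div_div, hden] using hineq x hx
  change _ ≤ _ + D ^ 2 / (4 * η) * rConst (2 / η) 1 / (2 * τ / η + 1)
  calc W τ ≤ exp (-τ) * W 0 + D ^ 2 / (4 * η) * (2 / η + 1) / (2 / η * τ + 1) :=
        le_exp_neg_mul_add_div_of_hasDerivWithinAt (by positivity) (by positivity) hW hle hτ
    _ ≤ exp (-τ) * W 0 + D ^ 2 / (4 * η) * rConst (2 / η) 1 / (2 * τ / η + 1) := by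
        rw [hden]
        gcongr
        have ha : 1 ≤ 2 / η := (one_le_div hη0).mpr hη2.le
        simpa using add_le_rConst (α := 1) (by positivity) (by simpa using ha)

theorem stmt_5 (η : ℝ) (hη0 : 0 < η) (hη2 : η < 2) (D : ℝ) (hD : 0 ≤ D)
    (W W' : ℝ → ℝ)
    (hW : ∀ τ ≥ (0:ℝ), HasDerivWithinAt W (W' τ) (Set.Ici 0) τ)
    (hineq : ∀ τ ≥ (0:ℝ), W' τ ≤ -W τ + D ^ 2 / (4 * η * (2 * τ / η + 1))) :
    ∀ τ ≥ (0:ℝ),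
      W τ ≤ Real.exp (-τ) * W 0 +
        (D ^ 2 / (4 * η)) *
          (((2 / η) * 1) ^ (1:ℝ) *
              (∫ s in (0:ℝ)..(((2 / η) * 1 - 1) / (2 / η)),
                Real.exp (s - ((2 / η) * 1 - 1) / (2 / η)) *
                  ((2 / η) * s + 1) ^ (-(1:ℝ)))
            + ((2 / η) * 1 + 1)
            + (((2 / η) * 1 + 1) / ((2 / η) * 1)) ^ (1:ℝ) *
                (1 - Real.exp (-(1 / (2 / η))))) / (2 * τ / η + 1) :=
  stmt_5_general η hη0 hη2 D W W' hW hineq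
end

section
/- Let H be a real Hilbert space, B : H → H a continuous linear operator, β > 0 with ⟨B x, x⟩ ≥ β ‖x‖² for all x ∈ H, K > 0 with K β > 1/2, and set η := 2 K β − 1. Let X : ℝ → H be differentiable on [0, ∞), and let g, d : ℝ → H be such that for all t ≥ 0: X′(t) = −g(t) − K (1 + t) B(X(t)) + d(t), ⟨g(t), X(t)⟩ ≥ 0, and ‖d(t)‖ ≤ D for a constant D ≥ 0. Then there exists a constant C > 0, depending only on η, such that for all t ≥ 0: ‖X(t)‖² ≤ e^{−η t (t + 2) / 2} ‖X(0)‖² + C · D² / (1 + t)². -/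
open Real Set
open scoped RealInnerProductSpace

/-!
With `u = 1 + t`, coercivity and Young's inequality `2 D ‖x‖ ≤ u ‖x‖² + D² / u` give the scalar
differential inequality `φ' ≤ -η u φ + D² / u` for `φ = ‖X‖²`. The homogeneous equation has the
integrating factor `exp (η t (t + 2) / 2)`, and `G = 2 / (η u²) - 4 / (η² u⁴)` is an explicit
supersolution of the inhomogeneous one, so `φ - D² G` decays like the Gaussian. Finally
`u² exp (-η t (t + 2) / 2) ≤ 2 exp (η / 2) / η` turns the remaining Gaussian term into `O(u⁻²)`.
-/

theorem two_inner_neg_sub_smul_add_le {H : Type*} [NormedAddCommGroup H] [InnerProductSpace ℝ H]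
    {x g b d : H} {β K κ D : ℝ} (hb : β * ‖x‖ ^ 2 ≤ ⟪b, x⟫) (hg : 0 ≤ ⟪g, x⟫) (hd : ‖d‖ ≤ D)
    (hK : 0 ≤ K) (hκ : 0 < κ) :
    2 * ⟪x, -g - (K * κ) • b + d⟫ ≤ -((2 * K * β - 1) * κ) * ‖x‖ ^ 2 + D ^ 2 / κ := by
  have hexpand : ⟪x, -g - (K * κ) • b + d⟫ = -⟪g, x⟫ - K * κ * ⟪b, x⟫ + ⟪d, x⟫ := by
    simp only [inner_add_right, inner_sub_right, inner_neg_right, real_inner_smul_right,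
      real_inner_comm x]
  have hcoercive : K * κ * (β * ‖x‖ ^ 2) ≤ K * κ * ⟪b, x⟫ :=
    mul_le_mul_of_nonneg_left hb (by positivity)
  have hdx : ⟪d, x⟫ ≤ D * ‖x‖ :=
    (real_inner_le_norm d x).trans (mul_le_mul_of_nonneg_right hd (norm_nonneg x))
  have hyoung : 2 * D * ‖x‖ ≤ κ * ‖x‖ ^ 2 + D ^ 2 / κ := by
    have hsq : 0 ≤ (κ * ‖x‖ - D) ^ 2 / κ := by positivity
    have hid : κ * ‖x‖ ^ 2 + D ^ 2 / κ - 2 * D * ‖x‖ = (κ * ‖x‖ - D) ^ 2 / κ := by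
      field_simp
      ring
    linarith
  rw [hexpand]
  nlinarith

theorem le_exp_sub_mul_of_hasDerivWithinAt_le {ψ ψ' p p' : ℝ → ℝ} {a : ℝ}
    (hψ : ∀ t ≥ a, HasDerivWithinAt ψ (ψ' t) (Ici a) t)
    (hp : ∀ t ≥ a, HasDerivWithinAt p (p' t) (Ici a) t)
    (hψ' : ∀ t ≥ a, ψ' t ≤ -p' t * ψ t) {t : ℝ} (ht : a ≤ t) :
    ψ t ≤ exp (p a - p t) * ψ a := by
  have hW : ∀ s ≥ a, HasDerivWithinAt (fun s => exp (p s) * ψ s)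
      (exp (p s) * (p' s * ψ s + ψ' s)) (Ici a) s := fun s hs =>
    ((hp s hs).exp.mul (hψ s hs)).congr_deriv (by ring)
  have hanti : AntitoneOn (fun s => exp (p s) * ψ s) (Ici a) := by
    refine antitoneOn_of_hasDerivWithinAt_nonpos (convex_Ici a)
      (f' := fun s => exp (p s) * (p' s * ψ s + ψ' s))
      (fun s hs => (hW s hs).continuousWithinAt) (fun s hs => ?_) (fun s hs => ?_)
    · rw [interior_Ici] at hs ⊢
      exact (hW s hs.le).mono Ioi_subset_Ici_self
    · rw [interior_Ici] at hs
      exact mul_nonpos_of_nonneg_of_nonpos (exp_pos _).le (by linarith [hψ' s hs.le])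
  have hWt : exp (p t) * ψ t ≤ exp (p a) * ψ a := hanti self_mem_Ici ht ht
  rw [exp_sub, div_mul_eq_mul_div, le_div_iff₀ (exp_pos _)]
  linarith

noncomputable def decayProfile (η s : ℝ) : ℝ := 2 / η / (1 + s) ^ 2 - 4 / η ^ 2 / (1 + s) ^ 4

/-- The coefficients are chosen so that `G' + η u G - 1 / u = (1 - 4 / (η u²))² / u`. -/
theorem exists_hasDerivAt_decayProfile_ge {η s : ℝ} (hη : 0 < η) (hs : -1 < s) :
    ∃ G', HasDerivAt (decayProfile η) G' s ∧
      1 / (1 + s) - η * (1 + s) * decayProfile η s ≤ G' := by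
  have hu : 0 < 1 + s := by linarith
  refine ⟨-4 / η / (1 + s) ^ 3 + 16 / η ^ 2 / (1 + s) ^ 5, ?_, ?_⟩
  · have hu' : ∀ n : ℕ, (1 + s) ^ n ≠ 0 := fun n => pow_ne_zero n hu.ne'
    have h := ((hasDerivAt_const s (2 / η)).div (((hasDerivAt_id s).const_add 1).pow 2) (hu' 2)).sub
      ((hasDerivAt_const s (4 / η ^ 2)).div (((hasDerivAt_id s).const_add 1).pow 4) (hu' 4))
    refine h.congr_deriv ?_
    simp only [Pi.pow_apply, id, Nat.cast_ofNat]
    field_simp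
    ring
  · have hsq : 0 ≤ (1 - 4 / (η * (1 + s) ^ 2)) ^ 2 / (1 + s) := by positivity
    have hid : -4 / η / (1 + s) ^ 3 + 16 / η ^ 2 / (1 + s) ^ 5
        - (1 / (1 + s) - η * (1 + s) * decayProfile η s)
        = (1 - 4 / (η * (1 + s) ^ 2)) ^ 2 / (1 + s) := by
      unfold decayProfile
      field_simp
      ring
    linarith

theorem exp_neg_mul_one_add_sq_le {η : ℝ} (hη : 0 < η) (t : ℝ) :
    exp (-(η * t * (t + 2) / 2)) * (1 + t) ^ 2 ≤ 2 * exp (η / 2) / η := by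
  have hx := add_one_le_exp (η * (1 + t) ^ 2 / 2)
  rw [le_div_iff₀ hη, show -(η * t * (t + 2) / 2) = η / 2 - η * (1 + t) ^ 2 / 2 by ring,
    exp_sub, div_mul_eq_mul_div, div_mul_eq_mul_div, div_le_iff₀ (exp_pos _)]
  have := exp_pos (η / 2)
  nlinarith [sq_nonneg (1 + t)]

theorem le_exp_mul_add_div_sq_of_hasDerivWithinAt_le {η c : ℝ} (hη : 0 < η) (hc : 0 ≤ c)
    {φ φ' : ℝ → ℝ} (hφ : ∀ t ≥ 0, HasDerivWithinAt φ (φ' t) (Ici 0) t)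
    (hφ' : ∀ t ≥ 0, φ' t ≤ -(η * (1 + t)) * φ t + c / (1 + t)) {t : ℝ} (ht : 0 ≤ t) :
    φ t ≤ exp (-(η * t * (t + 2) / 2)) * φ 0 +
      (2 / η + 8 * exp (η / 2) / η ^ 3) * c / (1 + t) ^ 2 := by
  choose! G' hG' hG'_ge using fun (s : ℝ) (hs : 0 ≤ s) =>
    exists_hasDerivAt_decayProfile_ge hη (by linarith : -1 < s)
  have hp : ∀ s ≥ (0 : ℝ),
      HasDerivWithinAt (fun s => η * s * (s + 2) / 2) (η * (1 + s)) (Ici 0) s :=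
    fun s _ => ((((hasDerivAt_id s).const_mul η).mul ((hasDerivAt_id s).add_const 2)).div_const 2
      |>.congr_deriv (by simp only [id]; ring)).hasDerivWithinAt
  have hψ : ∀ s ≥ (0 : ℝ), HasDerivWithinAt (fun s => φ s - c * decayProfile η s)
      (φ' s - c * G' s) (Ici 0) s := fun s hs =>
    (hφ s hs).sub ((hG' s hs).hasDerivWithinAt.const_mul c)
  have hψ' : ∀ s ≥ (0 : ℝ), φ' s - c * G' s ≤ -(η * (1 + s)) * (φ s - c * decayProfile η s) := by
    intro s hs
    have h := mul_le_mul_of_nonneg_left (hG'_ge s hs) hc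
    linear_combination hφ' s hs + h
  have hdecay := le_exp_sub_mul_of_hasDerivWithinAt_le hψ hp hψ' ht
  rw [show η * 0 * (0 + 2) / 2 - η * t * (t + 2) / 2 = -(η * t * (t + 2) / 2) by ring] at hdecay
  set e := exp (-(η * t * (t + 2) / 2))
  have he : e ≤ 2 * exp (η / 2) / η / (1 + t) ^ 2 := by
    rw [le_div_iff₀ (by positivity)]
    exact exp_neg_mul_one_add_sq_le hη t
  have hG0 : decayProfile η 0 = 2 / η - 4 / η ^ 2 := by norm_num [decayProfile]
  have hGt : decayProfile η t ≤ 2 / η / (1 + t) ^ 2 :=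
    sub_le_self _ (by positivity)
  calc φ t ≤ e * φ 0 + e * c * (4 / η ^ 2 - 2 / η) + c * decayProfile η t := by
        rw [hG0] at hdecay; linarith
    _ ≤ e * φ 0 + 4 / η ^ 2 * c * e + c * (2 / η / (1 + t) ^ 2) := by
        have h2η : 0 ≤ e * c * (2 / η) := by positivity
        nlinarith [mul_le_mul_of_nonneg_left hGt hc]
    _ ≤ e * φ 0 + 4 / η ^ 2 * c * (2 * exp (η / 2) / η / (1 + t) ^ 2)
          + c * (2 / η / (1 + t) ^ 2) := by
        gcongr
    _ = e * φ 0 + (2 / η + 8 * exp (η / 2) / η ^ 3) * c / (1 + t) ^ 2 := by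
        field_simp
        ring

theorem stmt_7_general {H : Type*} [NormedAddCommGroup H] [InnerProductSpace ℝ H]
    (B : H →L[ℝ] H) (β : ℝ)
    (hB : ∀ x : H, β * ‖x‖ ^ 2 ≤ inner (B x) x (𝕜 := ℝ))
    (K : ℝ) (hK0 : 0 < K) (hKβ : 1 / 2 < K * β)
    (η : ℝ) (hη : η = 2 * K * β - 1) :
    ∃ C > (0:ℝ), ∀ (D : ℝ), 0 ≤ D → ∀ (X X' g d : ℝ → H),
      (∀ t ≥ (0:ℝ), HasDerivWithinAt X (X' t) (Set.Ici 0) t) →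
      (∀ t ≥ (0:ℝ), X' t = -g t - (K * (1 + t)) • B (X t) + d t) →
      (∀ t ≥ (0:ℝ), 0 ≤ inner (g t) (X t) (𝕜 := ℝ)) →
      (∀ t ≥ (0:ℝ), ‖d t‖ ≤ D) →
      ∀ t ≥ (0:ℝ),
        ‖X t‖ ^ 2 ≤ Real.exp (-(η * t * (t + 2) / 2)) * ‖X 0‖ ^ 2 +
          C * D ^ 2 / (1 + t) ^ 2 := by
  have hη0 : 0 < η := by rw [hη]; linarith
  refine ⟨2 / η + 8 * exp (η / 2) / η ^ 3, by positivity, ?_⟩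
  intro D _ X X' g d hX hX' hg hd t ht
  refine le_exp_mul_add_div_sq_of_hasDerivWithinAt_le hη0 (sq_nonneg D)
    (fun s hs => (hX s hs).norm_sq) (fun s hs => ?_) ht
  rw [hX' s hs, hη]
  exact two_inner_neg_sub_smul_add_le (hB (X s)) (hg s hs) (hd s hs) hK0.le (by linarith)

theorem stmt_7 {H : Type*} [NormedAddCommGroup H] [InnerProductSpace ℝ H]
    [CompleteSpace H] (B : H →L[ℝ] H) (β : ℝ) (hβ : 0 < β)
    (hB : ∀ x : H, β * ‖x‖ ^ 2 ≤ inner (B x) x (𝕜 := ℝ))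
    (K : ℝ) (hK0 : 0 < K) (hKβ : 1 / 2 < K * β)
    (η : ℝ) (hη : η = 2 * K * β - 1) :
    ∃ C > (0:ℝ), ∀ (D : ℝ), 0 ≤ D → ∀ (X X' g d : ℝ → H),
      (∀ t ≥ (0:ℝ), HasDerivWithinAt X (X' t) (Set.Ici 0) t) →
      (∀ t ≥ (0:ℝ), X' t = -g t - (K * (1 + t)) • B (X t) + d t) →
      (∀ t ≥ (0:ℝ), 0 ≤ inner (g t) (X t) (𝕜 := ℝ)) →
      (∀ t ≥ (0:ℝ), ‖d t‖ ≤ D) →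
      ∀ t ≥ (0:ℝ),
        ‖X t‖ ^ 2 ≤ Real.exp (-(η * t * (t + 2) / 2)) * ‖X 0‖ ^ 2 +
          C * D ^ 2 / (1 + t) ^ 2 :=
  stmt_7_general B β hB K hK0 hKβ η hη
end

section
/- Let H be a real Hilbert space, B : H → H a continuous linear operator, β > 0 with ⟨B x, x⟩ ≥ β ‖x‖² for all x ∈ H, K > 0, and set η := 2 K β − 1. Let X : ℝ → H be differentiable, and let g, d : ℝ → H satisfy for all t ≥ 0: X′(t) = −g(t) − K (1 + t) B(X(t)) + d(t) and ⟨g(t), X(t)⟩ ≥ 0. Then the function V(t) := ‖X(t)‖² is differentiable on [0, ∞) and satisfies, for all t ≥ 0: V′(t) ≤ −η (1 + t) V(t) + ‖d(t)‖² / (1 + t). -/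
/-!
Differentiating `‖X‖²` gives `2 ⟪X', X⟫`. Substituting the equation for `X'`, the term `-2 ⟪g, X⟫`
is nonpositive, coercivity bounds `-2K(1+t) ⟪B X, X⟫` by `-2Kβ(1+t) ‖X‖²`, and Young's inequality
with weight `1 + t` absorbs the forcing term `2 ⟪d, X⟫` at the price of one unit of the decay rate.
-/

open scoped RealInnerProductSpace

section

variable {H : Type*} [NormedAddCommGroup H] [InnerProductSpace ℝ H]

theorem two_mul_inner_le_mul_norm_sq_add_norm_sq_div {s : ℝ} (hs : 0 < s) (d x : H) :
    2 * ⟪d, x⟫ ≤ s * ‖x‖ ^ 2 + ‖d‖ ^ 2 / s :=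
  calc 2 * ⟪d, x⟫ ≤ 2 * ‖x‖ * ‖d‖ := by nlinarith [real_inner_le_norm d x]
    _ ≤ s * ‖x‖ ^ 2 + s⁻¹ * ‖d‖ ^ 2 := two_mul_le_add_mul_sq hs
    _ = s * ‖x‖ ^ 2 + ‖d‖ ^ 2 / s := by rw [inv_mul_eq_div]

theorem two_mul_inner_drift_le (B : H →L[ℝ] H) {β : ℝ} (hB : ∀ x : H, β * ‖x‖ ^ 2 ≤ ⟪B x, x⟫)
    {K s : ℝ} (hK : 0 ≤ K) (hs : 0 < s) {g d x : H} (hg : 0 ≤ ⟪g, x⟫) :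
    2 * ⟪x, -g - (K * s) • B x + d⟫ ≤ -(2 * K * β - 1) * s * ‖x‖ ^ 2 + ‖d‖ ^ 2 / s := by
  have hexpand : ⟪x, -g - (K * s) • B x + d⟫ = -⟪g, x⟫ - K * s * ⟪B x, x⟫ + ⟪d, x⟫ := by
    simp only [inner_add_right, inner_sub_right, inner_neg_right, real_inner_smul_right,
      real_inner_comm x]
  have hcoercive : K * s * (β * ‖x‖ ^ 2) ≤ K * s * ⟪B x, x⟫ :=
    mul_le_mul_of_nonneg_left (hB x) (mul_nonneg hK hs.le)
  have hyoung := two_mul_inner_le_mul_norm_sq_add_norm_sq_div hs d x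
  rw [hexpand]
  nlinarith

end

theorem stmt_8_general {H : Type*} [NormedAddCommGroup H] [InnerProductSpace ℝ H]
    (B : H →L[ℝ] H) (β : ℝ)
    (hB : ∀ x : H, β * ‖x‖ ^ 2 ≤ inner (B x) x (𝕜 := ℝ))
    (K : ℝ) (hK0 : 0 < K) (η : ℝ) (hη : η = 2 * K * β - 1)
    (X X' g d : ℝ → H)
    (hX : ∀ t : ℝ, HasDerivAt X (X' t) t)
    (heq : ∀ t ≥ (0:ℝ), X' t = -g t - (K * (1 + t)) • B (X t) + d t)
    (hg : ∀ t ≥ (0:ℝ), 0 ≤ inner (g t) (X t) (𝕜 := ℝ)) :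
    ∃ V' : ℝ → ℝ, ∀ t ≥ (0:ℝ),
      HasDerivAt (fun t => ‖X t‖ ^ 2) (V' t) t ∧
      V' t ≤ -η * (1 + t) * ‖X t‖ ^ 2 + ‖d t‖ ^ 2 / (1 + t) := by
  refine ⟨fun t => 2 * ⟪X t, X' t⟫, fun t ht => ⟨(hX t).norm_sq, ?_⟩⟩
  dsimp only
  rw [heq t ht, hη]
  exact two_mul_inner_drift_le B hB hK0.le (by linarith) (hg t ht)

theorem stmt_8 {H : Type*} [NormedAddCommGroup H] [InnerProductSpace ℝ H]
    [CompleteSpace H] (B : H →L[ℝ] H) (β : ℝ) (hβ : 0 < β)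
    (hB : ∀ x : H, β * ‖x‖ ^ 2 ≤ inner (B x) x (𝕜 := ℝ))
    (K : ℝ) (hK0 : 0 < K) (η : ℝ) (hη : η = 2 * K * β - 1)
    (X X' g d : ℝ → H)
    (hX : ∀ t : ℝ, HasDerivAt X (X' t) t)
    (heq : ∀ t ≥ (0:ℝ), X' t = -g t - (K * (1 + t)) • B (X t) + d t)
    (hg : ∀ t ≥ (0:ℝ), 0 ≤ inner (g t) (X t) (𝕜 := ℝ)) :
    ∃ V' : ℝ → ℝ, ∀ t ≥ (0:ℝ),
      HasDerivAt (fun t => ‖X t‖ ^ 2) (V' t) t ∧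
      V' t ≤ -η * (1 + t) * ‖X t‖ ^ 2 + ‖d t‖ ^ 2 / (1 + t) :=
  stmt_8_general B β hB K hK0 η hη X X' g d hX heq hg
end

section
/- Let H be a real Hilbert space and let S : ℝ → (H →L H) satisfy: S(0) = id; S(t + s) = S(t) ∘ S(s) for all t, s ≥ 0; for every x ∈ H the map t ↦ S(t) x is continuous on [0, ∞); and ‖S(t) x‖ ≤ ‖x‖ for all t ≥ 0 and x ∈ H. Let f : ℝ → ℝ be measurable and bounded on every compact subinterval of [0, ∞), and let d : ℝ → H be Bochner integrable on every compact subinterval of [0, ∞). Then for every X₀ ∈ H and every T > 0 there exists a unique continuous function X : [0, T] → H such that for all t ∈ [0, T]: X(t) = S(t) X₀ + ∫₀^{t} S(t − s)(f(s) • X(s) + d(s)) ds. -/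
open Real MeasureTheory intervalIntegral Set

open scoped Nat

/-!
Picard iteration in `C([0, T], H)`. Writing `Φ X` for the right-hand side of the mild equation,
the uniform bound `‖S t‖ ≤ C` and `|f| ≤ M` on `[0, T]` give the Volterra estimate
`‖Φ X t - Φ Y t‖ ≤ C M ∫₀ᵗ ‖X s - Y s‖ ds`, and iterating it,
`‖Φⁿ X - Φⁿ Y‖ ≤ (C M T)ⁿ / n! · ‖X - Y‖`. Some iterate of `Φ` is therefore a contraction, so `Φ`
has exactly one fixed point. That `Φ` maps continuous functions to continuous ones follows from
dominated convergence, once strong continuity plus the uniform bound on `S` is upgraded to joint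
continuity of `(t, x) ↦ S t x`.
-/

section Volterra

variable {E : Type*} [NormedAddCommGroup E] {T L : ℝ} {hT : 0 ≤ T}
  {Φ : C(Icc 0 T, E) → C(Icc 0 T, E)}

theorem norm_iterate_sub_le_of_volterra (hL : 0 ≤ L)
    (hΦ : ∀ X Y (t : Icc 0 T),
      ‖Φ X t - Φ Y t‖ ≤ L * ∫ s in (0:ℝ)..t, ‖IccExtend hT X s - IccExtend hT Y s‖)
    (n : ℕ) (X Y : C(Icc 0 T, E)) (t : Icc 0 T) :
    ‖Φ^[n] X t - Φ^[n] Y t‖ ≤ (L * t) ^ n / n ! * dist X Y := by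
  induction n generalizing t with
  | zero => simpa [← dist_eq_norm] using ContinuousMap.dist_apply_le_dist (f := X) (g := Y) t
  | succ n ih =>
    have ht : (0:ℝ) ≤ t := t.2.1
    have hbound : ∀ s ∈ Icc (0:ℝ) t, ‖IccExtend hT (Φ^[n] X) s - IccExtend hT (Φ^[n] Y) s‖
        ≤ L ^ n / n ! * dist X Y * s ^ n := fun s hs => by
      have hsT : s ∈ Icc 0 T := ⟨hs.1, hs.2.trans t.2.2⟩
      rw [IccExtend_of_mem _ _ hsT, IccExtend_of_mem _ _ hsT]
      exact (ih ⟨s, hsT⟩).trans_eq (by ring)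
    have hcont : Continuous fun s => ‖IccExtend hT (Φ^[n] X) s - IccExtend hT (Φ^[n] Y) s‖ := by
      fun_prop
    calc ‖Φ^[n + 1] X t - Φ^[n + 1] Y t‖
        ≤ L * ∫ s in (0:ℝ)..t, ‖IccExtend hT (Φ^[n] X) s - IccExtend hT (Φ^[n] Y) s‖ := by
          simpa only [Function.iterate_succ_apply'] using hΦ _ _ t
      _ ≤ L * ∫ s in (0:ℝ)..t, L ^ n / n ! * dist X Y * s ^ n := by
          gcongr
          have hpow : Continuous fun s : ℝ => L ^ n / n ! * dist X Y * s ^ n := by fun_prop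
          exact integral_mono_on ht (hcont.intervalIntegrable _ _) (hpow.intervalIntegrable _ _)
            hbound
      _ = (L * t) ^ (n + 1) / (n + 1)! * dist X Y := by
          rw [intervalIntegral.integral_const_mul, integral_pow, Nat.factorial_succ]
          push_cast
          field_simp
          ring

theorem existsUnique_fixedPoint_of_volterra [CompleteSpace E] (hL : 0 ≤ L)
    (hΦ : ∀ X Y (t : Icc 0 T),
      ‖Φ X t - Φ Y t‖ ≤ L * ∫ s in (0:ℝ)..t, ‖IccExtend hT X s - IccExtend hT Y s‖) :
    ∃! X, Φ X = X := by
  obtain ⟨n, hn⟩ : ∃ n : ℕ, (L * T) ^ n / n ! < 1 :=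
    ((FloorSemiring.tendsto_pow_div_factorial_atTop _).eventually_lt_const one_pos).exists
  have hLT : 0 ≤ L * T := mul_nonneg hL hT
  have hcontr : ContractingWith (⟨(L * T) ^ n / n !, by positivity⟩ : NNReal) Φ^[n] := by
    refine ⟨hn, LipschitzWith.of_dist_le_mul fun X Y => ?_⟩
    change dist _ _ ≤ (L * T) ^ n / n ! * dist X Y
    rw [ContinuousMap.dist_le (by positivity)]
    intro t
    rw [dist_eq_norm]
    refine (norm_iterate_sub_le_of_volterra hL hΦ n X Y t).trans ?_
    have hLt : L * t ≤ L * T := mul_le_mul_of_nonneg_left t.2.2 hL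
    gcongr
    exact mul_nonneg hL t.2.1
  exact ⟨_, hcontr.isFixedPt_fixedPoint_iterate,
    fun X hX => hcontr.fixedPoint_unique (Function.IsFixedPt.iterate hX n)⟩

end Volterra

theorem ContinuousLinearMap.continuous_uncurry_of_norm_le {α 𝕜 E F : Type*} [TopologicalSpace α]
    [NontriviallyNormedField 𝕜] [SeminormedAddCommGroup E] [NormedSpace 𝕜 E]
    [SeminormedAddCommGroup F] [NormedSpace 𝕜 F] {K : α → E →L[𝕜] F} {C : ℝ}
    (hK : ∀ x, Continuous fun a => K a x) (hC : ∀ a, ‖K a‖ ≤ C) :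
    Continuous fun p : α × E => K p.1 p.2 := by
  refine continuous_iff_continuousAt.2 fun ⟨a₀, x₀⟩ => ?_
  rw [ContinuousAt, tendsto_iff_norm_sub_tendsto_zero]
  have hlim : Filter.Tendsto (fun p : α × E => C * ‖p.2 - x₀‖ + ‖K p.1 x₀ - K a₀ x₀‖)
      (nhds (a₀, x₀)) (nhds (C * ‖x₀ - x₀‖ + ‖K a₀ x₀ - K a₀ x₀‖)) :=
    ((continuous_const.mul (continuous_snd.sub continuous_const).norm).add
      (((hK x₀).comp continuous_fst).sub continuous_const).norm).tendsto _
  refine squeeze_zero (fun _ => norm_nonneg _) (fun p => ?_) (by simpa using hlim)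
  calc ‖K p.1 p.2 - K a₀ x₀‖ = ‖K p.1 (p.2 - x₀) + (K p.1 x₀ - K a₀ x₀)‖ := by
        rw [map_sub, sub_add_sub_cancel]
    _ ≤ C * ‖p.2 - x₀‖ + ‖K p.1 x₀ - K a₀ x₀‖ :=
        (norm_add_le _ _).trans (add_le_add_left ((K p.1).le_of_opNorm_le (hC p.1) _) _)

section Convolution

variable {E F : Type*} [NormedAddCommGroup E] [NormedSpace ℝ E] [NormedAddCommGroup F]
  [NormedSpace ℝ F] {K : ℝ → E →L[ℝ] F} {C : ℝ} {g : ℝ → E}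

theorem aestronglyMeasurable_comp_sub_apply (hK : Continuous fun p : ℝ × E => K p.1 p.2)
    {μ : Measure ℝ} (hg : AEStronglyMeasurable g μ) (t : ℝ) :
    AEStronglyMeasurable (fun s => K (t - s) (g s)) μ :=
  hK.comp_aestronglyMeasurable
    ((continuous_const.sub continuous_id).aestronglyMeasurable.prodMk hg)

theorem integrable_comp_sub_apply (hK : Continuous fun p : ℝ × E => K p.1 p.2)
    (hC : ∀ t, ‖K t‖ ≤ C) {μ : Measure ℝ} (hg : Integrable g μ) (t : ℝ) :
    Integrable (fun s => K (t - s) (g s)) μ :=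
  (hg.norm.const_mul C).mono' (aestronglyMeasurable_comp_sub_apply hK hg.1 t)
    (.of_forall fun s => (K (t - s)).le_of_opNorm_le (hC _) _)

theorem continuousOn_intervalIntegral_comp_sub_apply
    (hK : Continuous fun p : ℝ × E => K p.1 p.2) (hC : ∀ t, ‖K t‖ ≤ C) {T : ℝ}
    (hg : IntegrableOn g (Ioc 0 T)) :
    ContinuousOn (fun t => ∫ s in (0:ℝ)..t, K (t - s) (g s)) (Icc 0 T) := by
  -- Moving the variable endpoint into an indicator makes the domain of integration fixed.
  let G : ℝ → ℝ → F := fun t => (Iic t).indicator fun s => K (t - s) (g s)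
  have hG : ∀ t ∈ Icc 0 T, ∫ s in (0:ℝ)..t, K (t - s) (g s) = ∫ s in Ioc 0 T, G t s := by
    intro t ht
    rw [integral_of_le ht.1, setIntegral_indicator measurableSet_Iic, Ioc_inter_Iic,
      min_eq_right ht.2]
  refine ContinuousOn.congr (fun t₀ _ => ContinuousAt.continuousWithinAt ?_) hG
  refine continuousAt_of_dominated (bound := fun s => C * ‖g s‖)
    (.of_forall fun t => (aestronglyMeasurable_comp_sub_apply hK hg.1 t).indicator
      measurableSet_Iic)
    (.of_forall fun t => .of_forall fun s => ?_) (hg.norm.const_mul C) ?_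
  · by_cases hs : s ≤ t
    · simpa [G, hs] using (K (t - s)).le_of_opNorm_le (hC _) _
    · simpa [G, hs] using mul_nonneg ((norm_nonneg _).trans (hC 0)) (norm_nonneg (g s))
  · filter_upwards [Measure.ae_ne _ t₀] with s hs
    rcases hs.lt_or_gt with hst | hst
    · have hKs : ContinuousAt (fun t => K (t - s) (g s)) t₀ :=
        (hK.comp ((continuous_id.sub continuous_const).prodMk continuous_const)).continuousAt
      refine hKs.congr (Filter.eventually_of_mem (Ioi_mem_nhds hst) fun t ht => ?_)
      simp [G, le_of_lt (show s < t from ht)]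
    · refine (continuousAt_const (y := (0 : F))).congr
        (Filter.eventually_of_mem (Iio_mem_nhds hst) fun t ht => ?_)
      simp [G, not_le.2 (show t < s from ht)]

end Convolution

section MildSolution

variable {H : Type*} [NormedAddCommGroup H] [NormedSpace ℝ H] {S : ℝ → H →L[ℝ] H}
  {f : ℝ → ℝ} {d : ℝ → H} {X₀ : H} {T C M : ℝ}

-- `S` is only controlled on `[0, ∞)`; freezing it at `S 0` for negative times gives a
-- jointly continuous kernel on all of `ℝ × H`.
theorem continuous_uncurry_max_of_continuousOn (hS : ∀ x, ContinuousOn (fun t => S t x) (Ici 0))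
    (hC : ∀ t ≥ 0, ‖S t‖ ≤ C) : Continuous fun p : ℝ × H => S (max p.1 0) p.2 :=
  ContinuousLinearMap.continuous_uncurry_of_norm_le
    (fun x => (hS x).comp_continuous (continuous_id.max continuous_const) fun t => le_max_right t 0)
    fun t => hC _ (le_max_right t 0)

theorem integral_comp_sub_apply_eq_max {t : ℝ} (ht : 0 ≤ t) (g : ℝ → H) :
    ∫ s in (0:ℝ)..t, S (t - s) (g s) = ∫ s in (0:ℝ)..t, S (max (t - s) 0) (g s) :=
  integral_congr fun s hs => by
    rw [uIcc_of_le ht] at hs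
    rw [max_eq_left (sub_nonneg.2 hs.2)]

variable (S f d X₀) in
noncomputable def mildPicard (X : ℝ → H) (t : ℝ) : H :=
  S t X₀ + ∫ s in (0:ℝ)..t, S (t - s) (f s • X s + d s)

variable (S f d X₀ T) in
def IsMildSolution (X : ℝ → H) : Prop :=
  ContinuousOn X (Icc 0 T) ∧ ∀ t ∈ Icc 0 T, X t = mildPicard S f d X₀ X t

theorem integrableOn_smul_add (hfmeas : Measurable f) (hf : ∀ s ∈ Icc 0 T, |f s| ≤ M)
    (hd : IntegrableOn d (Icc 0 T)) {X : ℝ → H} (hX : ContinuousOn X (Icc 0 T)) :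
    IntegrableOn (fun s => f s • X s + d s) (Icc 0 T) :=
  ((Measure.integrableOn_of_bounded measure_Icc_lt_top.ne hfmeas.aestronglyMeasurable
    (ae_restrict_of_forall_mem measurableSet_Icc hf)).smul_continuousOn hX isCompact_Icc).add hd

theorem continuousOn_mildPicard (hS : ∀ x, ContinuousOn (fun t => S t x) (Ici 0))
    (hC : ∀ t ≥ 0, ‖S t‖ ≤ C) (hfmeas : Measurable f) (hf : ∀ s ∈ Icc 0 T, |f s| ≤ M)
    (hd : IntegrableOn d (Icc 0 T)) {X : ℝ → H} (hX : ContinuousOn X (Icc 0 T)) :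
    ContinuousOn (mildPicard S f d X₀ X) (Icc 0 T) :=
  ((hS X₀).mono Icc_subset_Ici_self).add <|
    (continuousOn_intervalIntegral_comp_sub_apply (continuous_uncurry_max_of_continuousOn hS hC)
      (fun t => hC _ (le_max_right t 0))
      ((integrableOn_smul_add hfmeas hf hd hX).mono_set Ioc_subset_Icc_self)).congr
    fun _ ht => integral_comp_sub_apply_eq_max ht.1 _

theorem norm_mildPicard_sub_le (hS : ∀ x, ContinuousOn (fun t => S t x) (Ici 0))
    (hC : ∀ t ≥ 0, ‖S t‖ ≤ C) (hfmeas : Measurable f) (hf : ∀ s ∈ Icc 0 T, |f s| ≤ M)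
    (hd : IntegrableOn d (Icc 0 T)) {X Y : ℝ → H} (hX : ContinuousOn X (Icc 0 T))
    (hY : ContinuousOn Y (Icc 0 T)) {t : ℝ} (ht : t ∈ Icc 0 T) :
    ‖mildPicard S f d X₀ X t - mildPicard S f d X₀ Y t‖ ≤
      C * M * ∫ s in (0:ℝ)..t, ‖X s - Y s‖ := by
  have hint : ∀ Z : ℝ → H, ContinuousOn Z (Icc 0 T) →
      IntervalIntegrable (fun s => S (t - s) (f s • Z s + d s)) volume 0 t := fun Z hZ => by
    rw [intervalIntegrable_iff_integrableOn_Ioc_of_le ht.1]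
    refine IntegrableOn.congr_fun (f := fun s => S (max (t - s) 0) (f s • Z s + d s)) ?_
      (fun s hs => ?_) measurableSet_Ioc
    · exact integrable_comp_sub_apply (continuous_uncurry_max_of_continuousOn hS hC)
        (fun t => hC _ (le_max_right t 0))
        ((integrableOn_smul_add hfmeas hf hd hZ).mono_set (Ioc_subset_Icc_self.trans
          (Icc_subset_Icc_right ht.2))) t
    · simp only [max_eq_left (sub_nonneg.2 hs.2)]
  have hdiff : ContinuousOn (fun s => C * M * ‖X s - Y s‖) (uIcc 0 t) := by
    rw [uIcc_of_le ht.1]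
    exact (continuousOn_const.mul (hX.sub hY).norm).mono (Icc_subset_Icc_right ht.2)
  rw [mildPicard, mildPicard, add_sub_add_left_eq_sub, ← integral_sub (hint X hX) (hint Y hY),
    ← intervalIntegral.integral_const_mul]
  refine norm_integral_le_of_norm_le ht.1 (.of_forall fun s hs => ?_) hdiff.intervalIntegrable
  calc ‖S (t - s) (f s • X s + d s) - S (t - s) (f s • Y s + d s)‖
      = ‖S (t - s) (f s • (X s - Y s))‖ := by
        rw [← map_sub, add_sub_add_right_eq_sub, smul_sub]
    _ ≤ C * (|f s| * ‖X s - Y s‖) := by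
        rw [← Real.norm_eq_abs, ← norm_smul]
        exact (S (t - s)).le_of_opNorm_le (hC _ (sub_nonneg.2 hs.2)) _
    _ ≤ C * M * ‖X s - Y s‖ := by
        rw [mul_assoc]
        gcongr
        · exact (norm_nonneg _).trans (hC 0 le_rfl)
        · exact hf s ⟨hs.1.le, hs.2.trans ht.2⟩

theorem mildPicard_congr {X Y : ℝ → H} (h : EqOn X Y (Icc 0 T)) :
    EqOn (mildPicard S f d X₀ X) (mildPicard S f d X₀ Y) (Icc 0 T) := fun t ht => by
  refine congrArg (S t X₀ + ·) (integral_congr fun s hs => ?_)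
  rw [uIcc_of_le ht.1] at hs
  simp only [h ⟨hs.1, hs.2.trans ht.2⟩]

theorem exists_isMildSolution_eqOn [CompleteSpace H]
    (hS : ∀ x, ContinuousOn (fun t => S t x) (Ici 0)) (hC : ∀ t ≥ 0, ‖S t‖ ≤ C)
    (hfmeas : Measurable f) (hf : ∀ s ∈ Icc 0 T, |f s| ≤ M) (hd : IntegrableOn d (Icc 0 T))
    (hT : 0 ≤ T) :
    ∃ X, IsMildSolution S f d X₀ T X ∧
      ∀ Y, IsMildSolution S f d X₀ T Y → EqOn Y X (Icc 0 T) := by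
  have hext : ∀ X : C(Icc 0 T, H), ContinuousOn (IccExtend hT X) (Icc 0 T) := fun X =>
    (X.continuous.comp continuous_projIcc).continuousOn
  let Φ : C(Icc 0 T, H) → C(Icc 0 T, H) := fun X =>
    ⟨(Icc 0 T).domRestrict (mildPicard S f d X₀ (IccExtend hT X)),
      (continuousOn_mildPicard hS hC hfmeas hf hd (hext X)).domRestrict⟩
  have hCM : 0 ≤ C * M :=
    mul_nonneg ((norm_nonneg _).trans (hC 0 le_rfl)) ((abs_nonneg _).trans (hf 0 ⟨le_rfl, hT⟩))
  obtain ⟨z, hz, hz_unique⟩ := existsUnique_fixedPoint_of_volterra (Φ := Φ) hCM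
    fun X Y t => norm_mildPicard_sub_le hS hC hfmeas hf hd (hext X) (hext Y) t.2
  refine ⟨IccExtend hT z, ⟨hext z, fun t ht => ?_⟩, fun Y hY t ht => ?_⟩
  · rw [IccExtend_of_mem hT z ht]
    exact (DFunLike.congr_fun hz ⟨t, ht⟩).symm
  · let Yc : C(Icc 0 T, H) := ⟨(Icc 0 T).domRestrict Y, hY.1.domRestrict⟩
    have hYc : EqOn (IccExtend hT Yc) Y (Icc 0 T) := fun s hs => IccExtend_of_mem hT Yc hs
    have hΦY : Φ Yc = Yc := ContinuousMap.ext fun s =>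
      (mildPicard_congr hYc s.2).trans (hY.2 s s.2).symm
    rw [IccExtend_of_mem hT z ht, ← hz_unique Yc hΦY]
    rfl

end MildSolution

theorem stmt_11_general {H : Type*} [NormedAddCommGroup H] [InnerProductSpace ℝ H]
    [CompleteSpace H] (S : ℝ → H →L[ℝ] H)
    (hScont : ∀ x : H, ContinuousOn (fun t => S t x) (Set.Ici 0))
    (hScontr : ∀ t ≥ (0:ℝ), ∀ x : H, ‖S t x‖ ≤ ‖x‖)
    (f : ℝ → ℝ) (hfmeas : Measurable f)
    (hfbdd : ∀ b ≥ (0:ℝ), ∃ M : ℝ, ∀ s ∈ Set.Icc (0:ℝ) b, |f s| ≤ M)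
    (d : ℝ → H)
    (hd : ∀ b ≥ (0:ℝ), MeasureTheory.IntegrableOn d (Set.Icc 0 b)) :
    ∀ (X₀ : H) (T : ℝ), 0 < T →
      ∃ X : ℝ → H,
        (ContinuousOn X (Set.Icc 0 T) ∧
          ∀ t ∈ Set.Icc (0:ℝ) T,
            X t = S t X₀ + ∫ s in (0:ℝ)..t, S (t - s) (f s • X s + d s)) ∧
        ∀ Y : ℝ → H,
          (ContinuousOn Y (Set.Icc 0 T) ∧
            ∀ t ∈ Set.Icc (0:ℝ) T,
              Y t = S t X₀ + ∫ s in (0:ℝ)..t, S (t - s) (f s • Y s + d s)) →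
          ∀ t ∈ Set.Icc (0:ℝ) T, Y t = X t := by
  intro X₀ T hT
  obtain ⟨M, hM⟩ := hfbdd T hT.le
  have hS1 : ∀ t ≥ 0, ‖S t‖ ≤ 1 := fun t ht =>
    (S t).opNorm_le_bound zero_le_one fun x => by simpa using hScontr t ht x
  exact exists_isMildSolution_eqOn hScont hS1 hfmeas hM (hd T hT.le) hT.le

theorem stmt_11 {H : Type*} [NormedAddCommGroup H] [InnerProductSpace ℝ H]
    [CompleteSpace H] (S : ℝ → H →L[ℝ] H)
    (hS0 : S 0 = ContinuousLinearMap.id ℝ H)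
    (hSadd : ∀ t ≥ (0:ℝ), ∀ s ≥ (0:ℝ), S (t + s) = (S t).comp (S s))
    (hScont : ∀ x : H, ContinuousOn (fun t => S t x) (Set.Ici 0))
    (hScontr : ∀ t ≥ (0:ℝ), ∀ x : H, ‖S t x‖ ≤ ‖x‖)
    (f : ℝ → ℝ) (hfmeas : Measurable f)
    (hfbdd : ∀ b ≥ (0:ℝ), ∃ M : ℝ, ∀ s ∈ Set.Icc (0:ℝ) b, |f s| ≤ M)
    (d : ℝ → H)
    (hd : ∀ b ≥ (0:ℝ), MeasureTheory.IntegrableOn d (Set.Icc 0 b)) :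
    ∀ (X₀ : H) (T : ℝ), 0 < T →
      ∃ X : ℝ → H,
        (ContinuousOn X (Set.Icc 0 T) ∧
          ∀ t ∈ Set.Icc (0:ℝ) T,
            X t = S t X₀ + ∫ s in (0:ℝ)..t, S (t - s) (f s • X s + d s)) ∧
        ∀ Y : ℝ → H,
          (ContinuousOn Y (Set.Icc 0 T) ∧
            ∀ t ∈ Set.Icc (0:ℝ) T,
              Y t = S t X₀ + ∫ s in (0:ℝ)..t, S (t - s) (f s • Y s + d s)) →
          ∀ t ∈ Set.Icc (0:ℝ) T, Y t = X t :=
  stmt_11_general S hScont hScontr f hfmeas hfbdd d hd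
end
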